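/- arXiv:1511.00314 — 3 statements merged into one kernel-verified Lean document; each statement's English description precedes it below -/
import Mathlib

section
/- Assume A and B are disjoint subsets of Arcs(n) satisfying Conditions C1 and C2. Then for any semiorder S on {1,…,n} such that ∑_{a∈A} χ^S_a − ∑_{b∈B} χ^S_b ≥ 1, one has |S ∩ A| ∈ {1,2,3,4}. Moreover, if ∑_{a∈A} χ^S_a − ∑_{b∈B} χ^S_b > 1, then either (α) S ∩ A is a directed path of length 2, i.e. S ∩ A = {(i,j),(j,k)} for some pairwise distinct i,j,k, and S ∩ B = ∅, or (β) S ∩ A is a directed path of length 3, i.e. S ∩ A = {(i,j),(j,k),(k,l)} for some pairwise distinct i,j,k,l, and S ∩ B = {(i,l)}. -/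
open Finset

abbrev Vec (n : ℕ) := Fin n × Fin n → ℝ

def chi {n : ℕ} (R : Finset (Fin n × Fin n)) : Vec n := fun p => if p ∈ R then 1 else 0

def IsPartialOrderRel {n : ℕ} (R : Finset (Fin n × Fin n)) : Prop :=
  (∀ i j : Fin n, (i, j) ∈ R → (j, i) ∉ R) ∧
  (∀ i j k : Fin n, (i, j) ∈ R → (j, k) ∈ R → (i, k) ∈ R)

def IsLinearOrderRel {n : ℕ} (R : Finset (Fin n × Fin n)) : Prop :=
  IsPartialOrderRel R ∧ ∀ i j : Fin n, i ≠ j → (i, j) ∈ R ∨ (j, i) ∈ R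

def IsStrictWeakOrderRel {n : ℕ} (R : Finset (Fin n × Fin n)) : Prop :=
  IsPartialOrderRel R ∧ ∀ i j k : Fin n, (i, k) ∈ R → (i, j) ∈ R ∨ (j, k) ∈ R

def IsIntervalOrderRel {n : ℕ} (R : Finset (Fin n × Fin n)) : Prop :=
  ∃ f g : Fin n → ℝ, (∀ i, f i ≤ g i) ∧ ∀ i j : Fin n, ((i, j) ∈ R ↔ g i < f j)

def IsSemiorderRel {n : ℕ} (R : Finset (Fin n × Fin n)) : Prop :=
  ∃ f : Fin n → ℝ, ∀ i j : Fin n, ((i, j) ∈ R ↔ f i + 1 < f j)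

def PPO (n : ℕ) : Set (Vec n) := convexHull ℝ {x | ∃ R, IsPartialOrderRel R ∧ x = chi R}
def PIO (n : ℕ) : Set (Vec n) := convexHull ℝ {x | ∃ R, IsIntervalOrderRel R ∧ x = chi R}
def PSO (n : ℕ) : Set (Vec n) := convexHull ℝ {x | ∃ R, IsSemiorderRel R ∧ x = chi R}
def PSWO (n : ℕ) : Set (Vec n) := convexHull ℝ {x | ∃ R, IsStrictWeakOrderRel R ∧ x = chi R}
def PLO (n : ℕ) : Set (Vec n) := convexHull ℝ {x | ∃ R, IsLinearOrderRel R ∧ x = chi R}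

open Classical in
noncomputable def adim {n : ℕ} (s : Set (Vec n)) : ℤ :=
  if s = ∅ then -1 else (Module.finrank ℝ (affineSpan ℝ s).direction : ℤ)

def lhs {n : ℕ} (α : Fin n × Fin n → ℝ) (x : Vec n) : ℝ := ∑ p : Fin n × Fin n, α p * x p

def Valid {n : ℕ} (α : Fin n × Fin n → ℝ) (β : ℝ) (P : Set (Vec n)) : Prop :=
  ∀ x ∈ P, lhs α x ≤ β

def Face {n : ℕ} (α : Fin n × Fin n → ℝ) (β : ℝ) (P : Set (Vec n)) : Set (Vec n) :=
  {x | x ∈ P ∧ lhs α x = β}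

def IsFDI {n : ℕ} (α : Fin n × Fin n → ℝ) (β : ℝ) (P : Set (Vec n)) : Prop :=
  Valid α β P ∧ adim (Face α β P) = adim P - 1

def primCoeff {n : ℕ} (A B : Finset (Fin n × Fin n)) : Fin n × Fin n → ℝ :=
  fun p => (if p ∈ A then (1 : ℝ) else 0) - (if p ∈ B then (1 : ℝ) else 0)

def InArcs {n : ℕ} (A : Finset (Fin n × Fin n)) : Prop := ∀ p ∈ A, p.1 ≠ p.2

def C1 {n : ℕ} (A : Finset (Fin n × Fin n)) : Prop :=
  ∀ i j k l : Fin n, (i, j) ∈ A → (k, l) ∈ A → (i, j) ≠ (k, l) → i ≠ k ∧ j ≠ l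

def C2 {n : ℕ} (A B : Finset (Fin n × Fin n)) : Prop :=
  ∀ i j k l : Fin n, (i, j) ∈ A → (k, l) ∈ A →
    i ≠ j → i ≠ k → i ≠ l → j ≠ k → j ≠ l → k ≠ l → (i, l) ∈ B

def C3 {n : ℕ} (A B : Finset (Fin n × Fin n)) : Prop :=
  ∀ i j k : Fin n, (i, j) ∈ A → (j, k) ∈ A → i ≠ j → j ≠ k → i ≠ k → (i, k) ∈ B

def C4 {n : ℕ} (A B : Finset (Fin n × Fin n)) : Prop :=
  ∀ i j k : Fin n, (i, j) ∈ A → (j, k) ∈ A → i ≠ j → j ≠ k → i ≠ k →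
    ((i, k) ∈ B ∨ ∃ p : Fin n, p ≠ i ∧ p ≠ j ∧ p ≠ k ∧ (i, p) ∈ B ∧ (p, k) ∈ B)

def C5 {n : ℕ} (A B : Finset (Fin n × Fin n)) : Prop :=
  ∀ i j k l : Fin n, (i, j) ∈ A → (j, k) ∈ A → (k, l) ∈ A →
    i ≠ j → i ≠ k → i ≠ l → j ≠ k → j ≠ l → k ≠ l →
    ((i, k) ∈ B ∨ (j, l) ∈ B ∨
     (∃ r : Fin n, r ≠ i ∧ r ≠ j ∧ r ≠ k ∧ r ≠ l ∧ (i, r) ∈ B ∧ (r, k) ∈ B) ∨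
     (∃ s : Fin n, s ≠ i ∧ s ≠ j ∧ s ≠ k ∧ s ≠ l ∧ (j, s) ∈ B ∧ (s, l) ∈ B) ∨
     (∃ t : Fin n, t ≠ i ∧ t ≠ j ∧ t ≠ k ∧ t ≠ l ∧ (i, t) ∈ B ∧ (t, l) ∈ B) ∨
     (∃ u v : Fin n, u ≠ v ∧ u ≠ i ∧ u ≠ j ∧ u ≠ k ∧ u ≠ l ∧
        v ≠ i ∧ v ≠ j ∧ v ≠ k ∧ v ≠ l ∧ (i, u) ∈ B ∧ (u, v) ∈ B ∧ (v, l) ∈ B))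

lemma ne_of_flt {n : ℕ} (f : Fin n → ℝ) {a b : Fin n} (h : f a < f b) : a ≠ b :=
  fun e => absurd h (by rw [e]; exact lt_irrefl _)

lemma path2_case {n : ℕ} {A B S : Finset (Fin n × Fin n)} {f : Fin n → ℝ}
    (hf : ∀ i j : Fin n, ((i, j) ∈ S ↔ f i + 1 < f j))
    (hcard : (S ∩ A).card = 2) (hU : S ∩ B = ∅)
    {x y : Fin n × Fin n} (hx : x ∈ S ∩ A) (hy : y ∈ S ∩ A) (hxy : x.2 = y.1) :
    ∃ i j k : Fin n, i ≠ j ∧ j ≠ k ∧ i ≠ k ∧ S ∩ A = {(i, j), (j, k)} ∧ S ∩ B = ∅ := by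
  obtain ⟨hxS, hxA⟩ := Finset.mem_inter.1 hx
  obtain ⟨hyS, hyA⟩ := Finset.mem_inter.1 hy
  have h1 : f x.1 + 1 < f x.2 := (hf _ _).1 (by simpa using hxS)
  have h2 : f y.1 + 1 < f y.2 := (hf _ _).1 (by simpa using hyS)
  have e1 : f x.2 = f y.1 := by rw [hxy]
  refine ⟨x.1, x.2, y.2, ne_of_flt f (by linarith), ?_, ne_of_flt f (by linarith), ?_, hU⟩
  · have : f x.2 < f y.2 := by linarith
    exact ne_of_flt f this
  · have hxny : x ≠ y := fun h =>
      (ne_of_flt f (show f x.1 < f y.1 by linarith)) (congrArg Prod.fst h)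
    have hset : S ∩ A = {x, y} := by
      refine (Finset.eq_of_subset_of_card_le ?_ ?_).symm
      · intro p hp
        simp only [Finset.mem_insert, Finset.mem_singleton] at hp
        rcases hp with h | h <;> subst h <;> assumption
      · rw [hcard, Finset.card_insert_of_notMem (by simpa using hxny),
          Finset.card_singleton]
    rw [hset]
    have ey : (x.2, y.2) = y := by rw [hxy]
    rw [ey]

lemma path3_case {n : ℕ} {A B S : Finset (Fin n × Fin n)} {f : Fin n → ℝ}
    (hf : ∀ i j : Fin n, ((i, j) ∈ S ↔ f i + 1 < f j))
    (hC2 : C2 A B)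
    (hcard : (S ∩ A).card = 3) (hU : (S ∩ B).card ≤ 1)
    {x y z : Fin n × Fin n} (hx : x ∈ S ∩ A) (hy : y ∈ S ∩ A) (hz : z ∈ S ∩ A)
    (hxy : x.2 = y.1) (hyz : y.2 = z.1) :
    ∃ i j k l : Fin n, i ≠ j ∧ i ≠ k ∧ i ≠ l ∧ j ≠ k ∧ j ≠ l ∧ k ≠ l ∧
      S ∩ A = {(i, j), (j, k), (k, l)} ∧ S ∩ B = {(i, l)} := by
  obtain ⟨hxS, hxA⟩ := Finset.mem_inter.1 hx
  obtain ⟨hyS, hyA⟩ := Finset.mem_inter.1 hy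
  obtain ⟨hzS, hzA⟩ := Finset.mem_inter.1 hz
  have h1 : f x.1 + 1 < f x.2 := (hf _ _).1 (by simpa using hxS)
  have h2 : f y.1 + 1 < f y.2 := (hf _ _).1 (by simpa using hyS)
  have h3 : f z.1 + 1 < f z.2 := (hf _ _).1 (by simpa using hzS)
  have e1 : f x.2 = f y.1 := by rw [hxy]
  have e2 : f y.2 = f z.1 := by rw [hyz]
  have hBil : (x.1, z.2) ∈ B := by
    refine hC2 x.1 x.2 z.1 z.2 (by simpa using hxA) (by simpa using hzA)
      (ne_of_flt f (by linarith)) (ne_of_flt f (by linarith)) (ne_of_flt f (by linarith))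
      (ne_of_flt f (by linarith)) (ne_of_flt f (by linarith)) (ne_of_flt f (by linarith))
  refine ⟨x.1, x.2, y.2, z.2, ne_of_flt f (by linarith), ne_of_flt f (by linarith),
    ne_of_flt f (by linarith), ne_of_flt f (by linarith), ne_of_flt f (by linarith),
    ne_of_flt f (by linarith), ?_, ?_⟩
  · have hxny : x ≠ y := fun h =>
      (ne_of_flt f (show f x.1 < f y.1 by linarith)) (congrArg Prod.fst h)
    have hxnz : x ≠ z := fun h =>
      (ne_of_flt f (show f x.1 < f z.1 by linarith)) (congrArg Prod.fst h)
    have hynz : y ≠ z := fun h =>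
      (ne_of_flt f (show f y.1 < f z.1 by linarith)) (congrArg Prod.fst h)
    have hset : S ∩ A = {x, y, z} := by
      refine (Finset.eq_of_subset_of_card_le ?_ ?_).symm
      · intro p hp
        simp only [Finset.mem_insert, Finset.mem_singleton] at hp
        rcases hp with h | h | h <;> subst h <;> assumption
      · rw [hcard, Finset.card_eq_three.2 ⟨x, y, z, hxny, hxnz, hynz, rfl⟩]
    rw [hset]
    have ey : (x.2, y.2) = y := by rw [hxy]
    have ez : (y.2, z.2) = z := by rw [hyz]
    rw [ey, ez]
  · have hmem : (x.1, z.2) ∈ S ∩ B :=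
      Finset.mem_inter.2 ⟨(hf _ _).2 (by linarith), hBil⟩
    refine (Finset.eq_of_subset_of_card_le (Finset.singleton_subset_iff.2 hmem) ?_).symm
    simpa using hU

theorem semiorder_intersection_lemma (n : ℕ) (hn : 2 ≤ n)
    (A B : Finset (Fin n × Fin n)) (hdisj : Disjoint A B)
    (hA : InArcs A) (hB : InArcs B) (hC1 : C1 A) (hC2 : C2 A B)
    (S : Finset (Fin n × Fin n)) (hS : IsSemiorderRel S)
    (hge : 1 ≤ (∑ a ∈ A, chi S a) - ∑ b ∈ B, chi S b) :
    ((S ∩ A).card = 1 ∨ (S ∩ A).card = 2 ∨ (S ∩ A).card = 3 ∨ (S ∩ A).card = 4) ∧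
    (1 < (∑ a ∈ A, chi S a) - ∑ b ∈ B, chi S b →
      ((∃ i j k : Fin n, i ≠ j ∧ j ≠ k ∧ i ≠ k ∧
          S ∩ A = {(i, j), (j, k)} ∧ S ∩ B = ∅) ∨
       (∃ i j k l : Fin n, i ≠ j ∧ i ≠ k ∧ i ≠ l ∧ j ≠ k ∧ j ≠ l ∧ k ≠ l ∧
          S ∩ A = {(i, j), (j, k), (k, l)} ∧ S ∩ B = {(i, l)}))) := by
  classical
  obtain ⟨f, hf⟩ := hS
  -- rewrite the two sums as cardinalities
  have hsA : (∑ a ∈ A, chi S a) = (((S ∩ A).card : ℝ)) := by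
    simp only [chi]
    rw [Finset.sum_boole, Finset.filter_mem_eq_inter, Finset.inter_comm]
  have hsB : (∑ b ∈ B, chi S b) = (((S ∩ B).card : ℝ)) := by
    simp only [chi]
    rw [Finset.sum_boole, Finset.filter_mem_eq_inter, Finset.inter_comm]
  rw [hsA, hsB] at hge ⊢
  have hge' : (S ∩ B).card + 1 ≤ (S ∩ A).card := by
    have h : ((S ∩ B).card : ℝ) + 1 ≤ ((S ∩ A).card : ℝ) := by linarith
    exact_mod_cast h
  set T := S ∩ A with hTdef
  set U := S ∩ B with hUdef
  set m := T.card with hmdef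
  -- basic consequences of C1 and the semiorder representation
  have hmemS : ∀ p ∈ S, f p.1 + 1 < f p.2 := fun p hp => (hf p.1 p.2).1 (by simpa using hp)
  have tails : ∀ u v : Fin n × Fin n, u ∈ A → v ∈ A → u.1 = v.1 → u = v := by
    intro u v hu hv h
    by_contra hne
    exact (hC1 u.1 u.2 v.1 v.2 (by simpa using hu) (by simpa using hv)
      (by simpa using hne)).1 h
  have heads : ∀ u v : Fin n × Fin n, u ∈ A → v ∈ A → u.2 = v.2 → u = v := by
    intro u v hu hv h
    by_contra hne
    exact (hC1 u.1 u.2 v.1 v.2 (by simpa using hu) (by simpa using hv)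
      (by simpa using hne)).2 h
  have hTA : ∀ p ∈ T, p ∈ A := fun p hp => (Finset.mem_inter.1 hp).2
  have hTS : ∀ p ∈ T, p ∈ S := fun p hp => (Finset.mem_inter.1 hp).1
  -- the set D of ordered disjoint pairs witnessed in S
  set P4 : (Fin n × Fin n) × (Fin n × Fin n) → Prop :=
    fun p => p.1.1 ≠ p.2.1 ∧ p.1.1 ≠ p.2.2 ∧ p.1.2 ≠ p.2.1 ∧ p.1.2 ≠ p.2.2 with hP4def
  set D : Finset ((Fin n × Fin n) × (Fin n × Fin n)) :=
    (T ×ˢ T).filter (fun p => P4 p ∧ (p.1.1, p.2.2) ∈ S) with hDdef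
  have hmemD : ∀ p, p ∈ D ↔ p.1 ∈ T ∧ p.2 ∈ T ∧ P4 p ∧ (p.1.1, p.2.2) ∈ S := by
    intro p
    simp only [hDdef, Finset.mem_filter, Finset.mem_product]
    tauto
  -- D injects into U
  have hDU : D.card ≤ U.card := by
    apply Finset.card_le_card_of_injOn (fun p => (p.1.1, p.2.2))
    · intro p hp
      obtain ⟨h1, h2, h4, hS'⟩ := (hmemD p).1 hp
      refine Finset.mem_inter.2 ⟨hS', ?_⟩
      exact hC2 p.1.1 p.1.2 p.2.1 p.2.2 (by simpa using hTA _ h1) (by simpa using hTA _ h2)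
        (hA _ (hTA _ h1)) h4.1 h4.2.1 h4.2.2.1 h4.2.2.2 (hA _ (hTA _ h2))
    · intro p hp q hq h
      obtain ⟨hp1, hp2, -, -⟩ := (hmemD p).1 hp
      obtain ⟨hq1, hq2, -, -⟩ := (hmemD q).1 hq
      have h' : (p.1.1, p.2.2) = (q.1.1, q.2.2) := h
      obtain ⟨e1, e2⟩ := Prod.mk.injEq .. ▸ h'

      have := tails _ _ (hTA _ hp1) (hTA _ hq1) e1
      have := heads _ _ (hTA _ hp2) (hTA _ hq2) e2
      exact Prod.ext ‹p.1 = q.1› ‹p.2 = q.2›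
  -- m ≥ 1
  have hm1 : 1 ≤ m := by omega
  have hTne : T.Nonempty := Finset.card_pos.1 hm1
  obtain ⟨b₀, hb₀, hmin⟩ := T.exists_min_image (fun p => f p.1) hTne
  -- adjacency sets
  set Adj1 : Finset ((Fin n × Fin n) × (Fin n × Fin n)) :=
    T.offDiag.filter (fun p => p.1.2 = p.2.1) with hAdj1def
  set Adj2 : Finset ((Fin n × Fin n) × (Fin n × Fin n)) :=
    T.offDiag.filter (fun p => p.1.1 = p.2.2) with hAdj2def
  have hAdj1card : Adj1.card ≤ m - 1 := by
    have h : Adj1.card ≤ (T.erase b₀).card := by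
      apply Finset.card_le_card_of_injOn (fun p => p.2)
      · intro p hp
        obtain ⟨hoff, he⟩ := Finset.mem_filter.1 hp
        obtain ⟨hp1, hp2, -⟩ := Finset.mem_offDiag.1 hoff
        refine Finset.mem_erase.2 ⟨?_, hp2⟩
        intro hEq
        have hEq' : p.2 = b₀ := hEq
        have h1 : f p.1.1 + 1 < f p.1.2 := hmemS _ (hTS _ hp1)
        have hmin1 : f b₀.1 ≤ f p.1.1 := hmin _ hp1
        rw [hEq'] at he
        rw [← he] at hmin1
        linarith
      · intro p hp q hq h
        obtain ⟨hoffp, hep⟩ := Finset.mem_filter.1 hp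
        obtain ⟨hoffq, heq⟩ := Finset.mem_filter.1 hq
        obtain ⟨hp1, -, -⟩ := Finset.mem_offDiag.1 hoffp
        obtain ⟨hq1, -, -⟩ := Finset.mem_offDiag.1 hoffq
        have h' : p.2 = q.2 := h
        have : p.1.2 = q.1.2 := by rw [hep, heq, h']
        exact Prod.ext (heads _ _ (hTA _ hp1) (hTA _ hq1) this) h'
    rwa [Finset.card_erase_of_mem hb₀] at h
  have hAdj2card : Adj2.card ≤ m - 1 := by
    have h : Adj2.card ≤ (T.erase b₀).card := by
      apply Finset.card_le_card_of_injOn (fun p => p.1)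
      · intro p hp
        obtain ⟨hoff, he⟩ := Finset.mem_filter.1 hp
        obtain ⟨hp1, hp2, -⟩ := Finset.mem_offDiag.1 hoff
        refine Finset.mem_erase.2 ⟨?_, hp1⟩
        intro hEq
        have hEq' : p.1 = b₀ := hEq
        have h1 : f p.2.1 + 1 < f p.2.2 := hmemS _ (hTS _ hp2)
        have hmin1 : f b₀.1 ≤ f p.2.1 := hmin _ hp2
        rw [hEq'] at he
        rw [← he] at h1
        linarith
      · intro p hp q hq h
        obtain ⟨hoffp, hep⟩ := Finset.mem_filter.1 hp
        obtain ⟨hoffq, heq⟩ := Finset.mem_filter.1 hq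
        obtain ⟨-, hp2, -⟩ := Finset.mem_offDiag.1 hoffp
        obtain ⟨-, hq2, -⟩ := Finset.mem_offDiag.1 hoffq
        have h' : p.1 = q.1 := h
        have : p.2.2 = q.2.2 := by rw [← hep, ← heq, h']
        exact Prod.ext h' (heads _ _ (hTA _ hp2) (hTA _ hq2) this)
    rwa [Finset.card_erase_of_mem hb₀] at h
  -- the disjoint pairs set E
  set E : Finset ((Fin n × Fin n) × (Fin n × Fin n)) := T.offDiag.filter P4 with hEdef
  have hcover : T.offDiag ⊆ E ∪ (Adj1 ∪ Adj2) := by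
    intro p hp
    obtain ⟨hp1, hp2, hpne⟩ := Finset.mem_offDiag.1 hp
    by_cases h1 : p.1.2 = p.2.1
    · exact Finset.mem_union_right _ (Finset.mem_union_left _ (Finset.mem_filter.2 ⟨hp, h1⟩))
    by_cases h2 : p.1.1 = p.2.2
    · exact Finset.mem_union_right _ (Finset.mem_union_right _ (Finset.mem_filter.2 ⟨hp, h2⟩))
    refine Finset.mem_union_left _ (Finset.mem_filter.2 ⟨hp, ?_, h2, h1, ?_⟩)
    · exact fun h => hpne (tails _ _ (hTA _ hp1) (hTA _ hp2) h)
    · exact fun h => hpne (heads _ _ (hTA _ hp1) (hTA _ hp2) h)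
  have hED : E.card ≤ 2 * D.card := by
    have hsub : E ⊆ D ∪ D.image Prod.swap := by
      intro p hp
      obtain ⟨hoff, h4⟩ := Finset.mem_filter.1 hp
      obtain ⟨hp1, hp2, -⟩ := Finset.mem_offDiag.1 hoff
      have ha := hmemS _ (hTS _ hp1)
      have hb := hmemS _ (hTS _ hp2)
      rcases le_or_gt (f p.1.2) (f p.2.2) with h | h
      · exact Finset.mem_union_left _
          ((hmemD p).2 ⟨hp1, hp2, h4, (hf _ _).2 (by linarith)⟩)
      · refine Finset.mem_union_right _ (Finset.mem_image.2 ⟨(p.2, p.1), ?_, rfl⟩)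
        exact (hmemD (p.2, p.1)).2
          ⟨hp2, hp1, ⟨h4.1.symm, h4.2.2.1.symm, h4.2.1.symm, h4.2.2.2.symm⟩,
            (hf _ _).2 (by linarith)⟩
    calc E.card ≤ (D ∪ D.image Prod.swap).card := Finset.card_le_card hsub
      _ ≤ D.card + (D.image Prod.swap).card := Finset.card_union_le _ _
      _ ≤ D.card + D.card := by
          exact Nat.add_le_add_left (Finset.card_image_le) _
      _ = 2 * D.card := by ring
  have hoffcard : T.offDiag.card = m * m - m := by
    rw [Finset.offDiag_card]
  have hkey : m * m - m ≤ 2 * D.card + (m - 1) + (m - 1) := by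
    calc m * m - m = T.offDiag.card := hoffcard.symm
      _ ≤ (E ∪ (Adj1 ∪ Adj2)).card := Finset.card_le_card hcover
      _ ≤ E.card + (Adj1 ∪ Adj2).card := Finset.card_union_le _ _
      _ ≤ E.card + (Adj1.card + Adj2.card) :=
          Nat.add_le_add_left (Finset.card_union_le _ _) _
      _ ≤ 2 * D.card + ((m - 1) + (m - 1)) := by
          exact Nat.add_le_add hED (Nat.add_le_add hAdj1card hAdj2card)
      _ = 2 * D.card + (m - 1) + (m - 1) := by omega
  -- first part: 1 ≤ m ≤ 4
  have hm4 : m ≤ 4 := by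
    by_contra h
    push_neg at h
    have h5 : 5 * m ≤ m * m := Nat.mul_le_mul_right m h
    omega
  constructor
  · omega
  -- second part
  intro hgt
  have hge2 : U.card + 2 ≤ m := by
    have h : ((U.card : ℝ)) + 1 < ((m : ℝ)) := by
      simp only [hTdef, hUdef, hmdef] at *
      linarith
    have : U.card + 1 < m := by exact_mod_cast h
    omega
  have hm23 : m = 2 ∨ m = 3 := by
    rcases (by omega : m = 2 ∨ m = 3 ∨ m = 4) with h | h | h
    · exact Or.inl h
    · exact Or.inr h
    · exfalso
      have : m * m = 16 := by rw [h]
      omega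
  have hD1 : D.card ≤ 1 := by omega
  -- producing elements of D from non-adjacent pairs
  have mkD : ∀ u v : Fin n × Fin n, u ∈ T → v ∈ T → u ≠ v →
      (u.2 ≠ v.1 ∧ v.2 ≠ u.1) → ((u, v) ∈ D ∨ (v, u) ∈ D) := by
    intro u v hu hv hne hnadj
    have d1 : u.1 ≠ v.1 := fun h => hne (tails _ _ (hTA _ hu) (hTA _ hv) h)
    have d2 : u.2 ≠ v.2 := fun h => hne (heads _ _ (hTA _ hu) (hTA _ hv) h)
    have d3 : u.2 ≠ v.1 := hnadj.1
    have d4 : u.1 ≠ v.2 := fun h => hnadj.2 h.symm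
    have hu' := hmemS _ (hTS _ hu)
    have hv' := hmemS _ (hTS _ hv)
    rcases le_or_gt (f u.2) (f v.2) with h | h
    · exact Or.inl ((hmemD (u, v)).2 ⟨hu, hv, ⟨d1, d4, d3, d2⟩, (hf _ _).2 (by linarith)⟩)
    · exact Or.inr ((hmemD (v, u)).2
        ⟨hv, hu, ⟨d1.symm, fun h => d3 h.symm, fun h => d4 h.symm, d2.symm⟩,
          (hf _ _).2 (by linarith)⟩)
  have twoD : ∀ d1 d2, d1 ∈ D → d2 ∈ D → d1 ≠ d2 → False := by
    intro d1 d2 h1 h2 hne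
    have : 1 < D.card := Finset.one_lt_card.2 ⟨d1, h1, d2, h2, hne⟩
    omega
  rcases hm23 with hm | hm
  · -- m = 2 : directed path of length 2
    left
    have hU0 : U = ∅ := Finset.card_eq_zero.1 (by omega)
    have hD0 : D = ∅ := Finset.card_eq_zero.1 (by omega)
    obtain ⟨a, b, hab, hTab⟩ := Finset.card_eq_two.1 hm
    have haT : a ∈ T := by rw [hTab]; simp
    have hbT : b ∈ T := by rw [hTab]; simp
    have hadj : a.2 = b.1 ∨ b.2 = a.1 := by
      by_contra hnadj
      push_neg at hnadj
      rcases mkD a b haT hbT hab hnadj with h | h <;> simp [hD0] at h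
    rcases hadj with h | h
    · exact path2_case hf hm hU0 haT hbT h
    · exact path2_case hf hm hU0 hbT haT h
  · -- m = 3 : directed path of length 3
    right
    have hU1 : U.card ≤ 1 := by omega
    obtain ⟨a, b, c, hab, hac, hbc, hTabc⟩ := Finset.card_eq_three.1 hm
    have haT : a ∈ T := by rw [hTabc]; simp
    have hbT : b ∈ T := by rw [hTabc]; simp
    have hcT : c ∈ T := by rw [hTabc]; simp
    -- at least two of the three pairs are adjacent
    have hPab : (a.2 = b.1 ∨ b.2 = a.1) ∨ (a.2 = c.1 ∨ c.2 = a.1) := by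
      by_contra hcon
      push_neg at hcon
      rcases mkD a b haT hbT hab hcon.1 with h1 | h1 <;>
        rcases mkD a c haT hcT hac hcon.2 with h2 | h2
      · exact twoD _ _ h1 h2 (fun h => hbc (congrArg Prod.snd h))
      · exact twoD _ _ h1 h2 (fun h => hac (congrArg Prod.fst h))
      · exact twoD _ _ h1 h2 (fun h => hab (congrArg Prod.fst h).symm)
      · exact twoD _ _ h1 h2 (fun h => hbc (congrArg Prod.fst h))
    have hPab2 : (a.2 = b.1 ∨ b.2 = a.1) ∨ (b.2 = c.1 ∨ c.2 = b.1) := by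
      by_contra hcon
      push_neg at hcon
      rcases mkD a b haT hbT hab hcon.1 with h1 | h1 <;>
        rcases mkD b c hbT hcT hbc hcon.2 with h2 | h2
      · exact twoD _ _ h1 h2 (fun h => hab (congrArg Prod.fst h))
      · exact twoD _ _ h1 h2 (fun h => hac (congrArg Prod.fst h))
      · exact twoD _ _ h1 h2 (fun h => hac (congrArg Prod.snd h))
      · exact twoD _ _ h1 h2 (fun h => hbc (congrArg Prod.fst h))
    have hPac2 : (a.2 = c.1 ∨ c.2 = a.1) ∨ (b.2 = c.1 ∨ c.2 = b.1) := by
      by_contra hcon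
      push_neg at hcon
      rcases mkD a c haT hcT hac hcon.1 with h1 | h1 <;>
        rcases mkD b c hbT hcT hbc hcon.2 with h2 | h2
      · exact twoD _ _ h1 h2 (fun h => hab (congrArg Prod.fst h))
      · exact twoD _ _ h1 h2 (fun h => hac (congrArg Prod.fst h))
      · exact twoD _ _ h1 h2 (fun h => hac (congrArg Prod.snd h))
      · exact twoD _ _ h1 h2 (fun h => hab (congrArg Prod.snd h))
    rcases hPab with hP1 | hP1
    · rcases hPac2 with hP2 | hP2
      · -- Pab and Pac
        rcases hP1 with h1 | h1 <;> rcases hP2 with h2 | h2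
        · exact absurd (tails b c (hTA _ hbT) (hTA _ hcT) (h1.symm.trans h2)) hbc
        · exact path3_case hf hC2 hm hU1 hcT haT hbT h2 h1
        · exact path3_case hf hC2 hm hU1 hbT haT hcT h1 h2
        · exact absurd (heads b c (hTA _ hbT) (hTA _ hcT) (h1.trans h2.symm)) hbc
      · -- Pab and Pbc
        rcases hP1 with h1 | h1 <;> rcases hP2 with h2 | h2
        · exact path3_case hf hC2 hm hU1 haT hbT hcT h1 h2
        · exact absurd (heads a c (hTA _ haT) (hTA _ hcT) (h1.trans h2.symm)) hac
        · exact absurd (tails a c (hTA _ haT) (hTA _ hcT) (h1.symm.trans h2)) hac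
        · exact path3_case hf hC2 hm hU1 hcT hbT haT h2 h1
    · rcases hPab2 with hP2 | hP2
      · -- Pac and Pab
        rcases hP1 with h1 | h1 <;> rcases hP2 with h2 | h2
        · exact absurd (tails b c (hTA _ hbT) (hTA _ hcT) (h2.symm.trans h1)) hbc
        · exact path3_case hf hC2 hm hU1 hbT haT hcT h2 h1
        · exact path3_case hf hC2 hm hU1 hcT haT hbT h1 h2
        · exact absurd (heads b c (hTA _ hbT) (hTA _ hcT) (h2.trans h1.symm)) hbc
      · -- Pac and Pbc
        rcases hP1 with h1 | h1 <;> rcases hP2 with h2 | h2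
        · exact absurd (heads a b (hTA _ haT) (hTA _ hbT) (h1.trans h2.symm)) hab
        · exact path3_case hf hC2 hm hU1 haT hcT hbT h1 h2
        · exact path3_case hf hC2 hm hU1 hbT hcT haT h2 h1
        · exact absurd (tails a b (hTA _ haT) (hTA _ hbT) (h1.symm.trans h2)) hab
end

section
/- For n ≥ 6, the exceptional inequality ∑_{a∈A_6} x_a − ∑_{b∈B_6} x_b ≤ 1 is valid for the semiorder polytope PSO_n but does not define a facet of PSO_n; indeed, every semiorder S on {1,…,n} whose characteristic vector satisfies the exceptional inequality with equality satisfies (5,6) ∉ S, so all vertices of PSO_n lying in the face defined by the exceptional inequality also lie in the face defined by −x_{56} ≤ 0. -/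
open Finset

def A6 (n : ℕ) (hn : 6 ≤ n) : Finset (Fin n × Fin n) :=
  {(⟨0, by omega⟩, ⟨1, by omega⟩), (⟨1, by omega⟩, ⟨2, by omega⟩),
   (⟨2, by omega⟩, ⟨3, by omega⟩), (⟨3, by omega⟩, ⟨0, by omega⟩)}

def B6 (n : ℕ) (hn : 6 ≤ n) : Finset (Fin n × Fin n) :=
  {(⟨1, by omega⟩, ⟨0, by omega⟩), (⟨2, by omega⟩, ⟨1, by omega⟩),
   (⟨3, by omega⟩, ⟨2, by omega⟩), (⟨0, by omega⟩, ⟨3, by omega⟩),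
   (⟨4, by omega⟩, ⟨0, by omega⟩), (⟨4, by omega⟩, ⟨1, by omega⟩),
   (⟨4, by omega⟩, ⟨2, by omega⟩), (⟨4, by omega⟩, ⟨3, by omega⟩),
   (⟨5, by omega⟩, ⟨4, by omega⟩),
   (⟨0, by omega⟩, ⟨5, by omega⟩), (⟨1, by omega⟩, ⟨5, by omega⟩),
   (⟨2, by omega⟩, ⟨5, by omega⟩), (⟨3, by omega⟩, ⟨5, by omega⟩)}


noncomputable def b01 (x y : ℝ) : ℝ := if x + 1 < y then 1 else 0

lemma b01_nonneg (x y : ℝ) : 0 ≤ b01 x y := by unfold b01; split <;> norm_num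

lemma b01_le_one (x y : ℝ) : b01 x y ≤ 1 := by unfold b01; split <;> norm_num

lemma b01_pos {x y : ℝ} (h : x + 1 < y) : b01 x y = 1 := if_pos h

lemma b01_neg {x y : ℝ} (h : y ≤ x + 1) : b01 x y = 0 := if_neg (not_lt.mpr h)

section keylemmas
variable (x0 x1 x2 x3 x4 x5 : ℝ)

local notation "GOAL" => b01 x0 x1 + b01 x1 x2 + b01 x2 x3 + b01 x3 x0 + b01 x4 x5 ≤
  1 + (b01 x1 x0 + b01 x2 x1 + b01 x3 x2 + b01 x0 x3
     + b01 x4 x0 + b01 x4 x1 + b01 x4 x2 + b01 x4 x3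
     + b01 x5 x4 + b01 x0 x5 + b01 x1 x5 + b01 x2 x5 + b01 x3 x5)

lemma key3 (h1 : x0 + 1 < x1) (h2 : x1 + 1 < x2) (h3 : x2 + 1 < x3) : GOAL := by
  have n1 := b01_nonneg x1 x0; have n2 := b01_nonneg x2 x1; have n3 := b01_nonneg x3 x2
  have n4 := b01_nonneg x0 x3; have n5 := b01_nonneg x4 x0; have n6 := b01_nonneg x4 x1
  have n7 := b01_nonneg x4 x2; have n8 := b01_nonneg x4 x3; have n9 := b01_nonneg x5 x4
  have n10 := b01_nonneg x0 x5; have n11 := b01_nonneg x1 x5; have n12 := b01_nonneg x2 x5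
  have n13 := b01_nonneg x3 x5
  have u1 := b01_le_one x0 x1; have u2 := b01_le_one x1 x2; have u3 := b01_le_one x2 x3
  have u4 := b01_le_one x3 x0; have u5 := b01_le_one x4 x5
  rcases lt_or_ge (x3 + 1) x0 with h4 | h4
  · linarith
  · have ha0 : b01 x3 x0 = 0 := b01_neg h4
    have e1 : b01 x0 x3 = 1 := b01_pos (by linarith)
    rcases lt_or_ge (x4 + 1) x5 with hc | hc
    · rcases lt_or_ge (x4 + 1) x2 with h5 | h5
      · have e2 : b01 x4 x2 = 1 := b01_pos h5
        have e3 : b01 x4 x3 = 1 := b01_pos (by linarith)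
        linarith
      · have e2 : b01 x0 x5 = 1 := b01_pos (by linarith)
        have e3 : b01 x1 x5 = 1 := b01_pos (by linarith)
        linarith
    · have ec : b01 x4 x5 = 0 := b01_neg hc
      rcases lt_or_ge (x4 + 1) x3 with h5 | h5
      · have e2 : b01 x4 x3 = 1 := b01_pos h5; linarith
      · rcases lt_or_ge (x0 + 1) x5 with h6 | h6
        · have e2 : b01 x0 x5 = 1 := b01_pos h6; linarith
        · have e2 : b01 x5 x4 = 1 := b01_pos (by linarith); linarith

lemma key2adj (h1 : x0 + 1 < x1) (h2 : x1 + 1 < x2) (h3 : x3 ≤ x2 + 1) (h4 : x0 ≤ x3 + 1) :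
    GOAL := by
  have n1 := b01_nonneg x1 x0; have n2 := b01_nonneg x2 x1; have n3 := b01_nonneg x3 x2
  have n4 := b01_nonneg x0 x3; have n5 := b01_nonneg x4 x0; have n6 := b01_nonneg x4 x1
  have n7 := b01_nonneg x4 x2; have n8 := b01_nonneg x4 x3; have n9 := b01_nonneg x5 x4
  have n10 := b01_nonneg x0 x5; have n11 := b01_nonneg x1 x5; have n12 := b01_nonneg x2 x5
  have n13 := b01_nonneg x3 x5
  have u1 := b01_le_one x0 x1; have u2 := b01_le_one x1 x2; have u3 := b01_le_one x2 x3
  have u4 := b01_le_one x3 x0; have u5 := b01_le_one x4 x5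
  have ea3 : b01 x2 x3 = 0 := b01_neg h3
  have ea4 : b01 x3 x0 = 0 := b01_neg h4
  have hr : b01 x3 x2 = 1 ∨ b01 x0 x3 = 1 := by
    rcases lt_or_ge (x3 + 1) x2 with h5 | h5
    · exact Or.inl (b01_pos h5)
    · exact Or.inr (b01_pos (by linarith))
  rcases lt_or_ge (x4 + 1) x5 with hc | hc
  · have hg : b01 x4 x2 = 1 ∨ b01 x1 x5 = 1 := by
      rcases lt_or_ge (x4 + 1) x2 with h5 | h5
      · exact Or.inl (b01_pos h5)
      · exact Or.inr (b01_pos (by linarith))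
    rcases hr with e | e <;> rcases hg with e' | e' <;> linarith
  · have ec : b01 x4 x5 = 0 := b01_neg hc
    rcases hr with e | e <;> linarith

lemma key2opp (h1 : x0 + 1 < x1) (h2 : x2 ≤ x1 + 1) (h3 : x2 + 1 < x3) (h4 : x0 ≤ x3 + 1) :
    GOAL := by
  have n1 := b01_nonneg x1 x0; have n2 := b01_nonneg x2 x1; have n3 := b01_nonneg x3 x2
  have n4 := b01_nonneg x0 x3; have n5 := b01_nonneg x4 x0; have n6 := b01_nonneg x4 x1
  have n7 := b01_nonneg x4 x2; have n8 := b01_nonneg x4 x3; have n9 := b01_nonneg x5 x4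
  have n10 := b01_nonneg x0 x5; have n11 := b01_nonneg x1 x5; have n12 := b01_nonneg x2 x5
  have n13 := b01_nonneg x3 x5
  have u1 := b01_le_one x0 x1; have u2 := b01_le_one x1 x2; have u3 := b01_le_one x2 x3
  have u4 := b01_le_one x3 x0; have u5 := b01_le_one x4 x5
  have ea2 : b01 x1 x2 = 0 := b01_neg h2
  have ea4 : b01 x3 x0 = 0 := b01_neg h4
  have hr : b01 x0 x3 = 1 ∨ b01 x2 x1 = 1 := by
    rcases lt_or_ge (x0 + 1) x3 with h5 | h5
    · exact Or.inl (b01_pos h5)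
    · exact Or.inr (b01_pos (by linarith))
  rcases lt_or_ge (x4 + 1) x5 with hc | hc
  · have hg : b01 x4 x3 = 1 ∨ b01 x2 x5 = 1 := by
      rcases lt_or_ge (x4 + 1) x3 with h5 | h5
      · exact Or.inl (b01_pos h5)
      · exact Or.inr (b01_pos (by linarith))
    rcases hr with e | e <;> rcases hg with e' | e' <;> linarith
  · have ec : b01 x4 x5 = 0 := b01_neg hc
    rcases hr with e | e <;> linarith

lemma key1 (h1 : x0 + 1 < x1) (h2 : x2 ≤ x1 + 1) (h3 : x3 ≤ x2 + 1) (h4 : x0 ≤ x3 + 1) :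
    GOAL := by
  have n1 := b01_nonneg x1 x0; have n2 := b01_nonneg x2 x1; have n3 := b01_nonneg x3 x2
  have n4 := b01_nonneg x0 x3; have n5 := b01_nonneg x4 x0; have n6 := b01_nonneg x4 x1
  have n7 := b01_nonneg x4 x2; have n8 := b01_nonneg x4 x3; have n9 := b01_nonneg x5 x4
  have n10 := b01_nonneg x0 x5; have n11 := b01_nonneg x1 x5; have n12 := b01_nonneg x2 x5
  have n13 := b01_nonneg x3 x5
  have u1 := b01_le_one x0 x1
  have ea2 : b01 x1 x2 = 0 := b01_neg h2
  have ea3 : b01 x2 x3 = 0 := b01_neg h3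
  have ea4 : b01 x3 x0 = 0 := b01_neg h4
  rcases lt_or_ge (x4 + 1) x5 with hc | hc
  · have hg : b01 x4 x1 = 1 ∨ b01 x0 x5 = 1 := by
      rcases lt_or_ge (x4 + 1) x1 with h5 | h5
      · exact Or.inl (b01_pos h5)
      · exact Or.inr (b01_pos (by linarith))
    have ec := b01_le_one x4 x5
    rcases hg with e | e <;> linarith
  · have ec : b01 x4 x5 = 0 := b01_neg hc
    linarith

lemma key0 (h1 : x1 ≤ x0 + 1) (h2 : x2 ≤ x1 + 1) (h3 : x3 ≤ x2 + 1) (h4 : x0 ≤ x3 + 1) :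
    GOAL := by
  have n1 := b01_nonneg x1 x0; have n2 := b01_nonneg x2 x1; have n3 := b01_nonneg x3 x2
  have n4 := b01_nonneg x0 x3; have n5 := b01_nonneg x4 x0; have n6 := b01_nonneg x4 x1
  have n7 := b01_nonneg x4 x2; have n8 := b01_nonneg x4 x3; have n9 := b01_nonneg x5 x4
  have n10 := b01_nonneg x0 x5; have n11 := b01_nonneg x1 x5; have n12 := b01_nonneg x2 x5
  have n13 := b01_nonneg x3 x5
  have u5 := b01_le_one x4 x5
  have ea1 : b01 x0 x1 = 0 := b01_neg h1
  have ea2 : b01 x1 x2 = 0 := b01_neg h2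
  have ea3 : b01 x2 x3 = 0 := b01_neg h3
  have ea4 : b01 x3 x0 = 0 := b01_neg h4
  linarith

end keylemmas

lemma key (x0 x1 x2 x3 x4 x5 : ℝ) :
    b01 x0 x1 + b01 x1 x2 + b01 x2 x3 + b01 x3 x0 + b01 x4 x5 ≤
    1 + (b01 x1 x0 + b01 x2 x1 + b01 x3 x2 + b01 x0 x3
       + b01 x4 x0 + b01 x4 x1 + b01 x4 x2 + b01 x4 x3
       + b01 x5 x4 + b01 x0 x5 + b01 x1 x5 + b01 x2 x5 + b01 x3 x5) := by
  rcases lt_or_ge (x0 + 1) x1 with h1 | h1 <;>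
  rcases lt_or_ge (x1 + 1) x2 with h2 | h2 <;>
  rcases lt_or_ge (x2 + 1) x3 with h3 | h3 <;>
  rcases lt_or_ge (x3 + 1) x0 with h4 | h4
  · exact key3 x0 x1 x2 x3 x4 x5 h1 h2 h3
  · exact key3 x0 x1 x2 x3 x4 x5 h1 h2 h3
  · linarith [key3 x3 x0 x1 x2 x4 x5 h4 h1 h2]
  · linarith [key2adj x0 x1 x2 x3 x4 x5 h1 h2 h3 h4]
  · linarith [key3 x2 x3 x0 x1 x4 x5 h3 h4 h1]
  · linarith [key2opp x0 x1 x2 x3 x4 x5 h1 h2 h3 h4]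
  · linarith [key2adj x3 x0 x1 x2 x4 x5 h4 h1 h2 h3]
  · linarith [key1 x0 x1 x2 x3 x4 x5 h1 h2 h3 h4]
  · linarith [key3 x1 x2 x3 x0 x4 x5 h2 h3 h4]
  · linarith [key2adj x1 x2 x3 x0 x4 x5 h2 h3 h4 h1]
  · linarith [key2opp x1 x2 x3 x0 x4 x5 h2 h3 h4 h1]
  · linarith [key1 x1 x2 x3 x0 x4 x5 h2 h3 h4 h1]
  · linarith [key2adj x2 x3 x0 x1 x4 x5 h3 h4 h1 h2]
  · linarith [key1 x2 x3 x0 x1 x4 x5 h3 h4 h1 h2]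
  · linarith [key1 x3 x0 x1 x2 x4 x5 h4 h1 h2 h3]
  · exact key0 x0 x1 x2 x3 x4 x5 h1 h2 h3 h4

lemma lhs_eq_sub {n : ℕ} (A B : Finset (Fin n × Fin n)) (x : Vec n) :
    lhs (primCoeff A B) x = (∑ p ∈ A, x p) - ∑ p ∈ B, x p := by
  unfold lhs primCoeff
  calc ∑ p : Fin n × Fin n, ((if p ∈ A then (1:ℝ) else 0) - if p ∈ B then (1:ℝ) else 0) * x p
      = ∑ p : Fin n × Fin n, ((if p ∈ A then x p else 0) - if p ∈ B then x p else 0) := by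
        refine Finset.sum_congr rfl fun p _ => by split_ifs <;> ring
    _ = (∑ p ∈ A, x p) - ∑ p ∈ B, x p := by
        rw [Finset.sum_sub_distrib, Finset.sum_ite_mem, Finset.sum_ite_mem,
          Finset.univ_inter, Finset.univ_inter]

lemma sumA6 {n : ℕ} (hn : 6 ≤ n) (x : Vec n) :
    ∑ p ∈ A6 n hn, x p = x (⟨0, by omega⟩, ⟨1, by omega⟩) + x (⟨1, by omega⟩, ⟨2, by omega⟩)
      + x (⟨2, by omega⟩, ⟨3, by omega⟩) + x (⟨3, by omega⟩, ⟨0, by omega⟩) := by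
  unfold A6
  rw [Finset.sum_insert (by simp [Prod.ext_iff, Fin.ext_iff]),
      Finset.sum_insert (by simp [Prod.ext_iff, Fin.ext_iff]),
      Finset.sum_insert (by simp [Prod.ext_iff, Fin.ext_iff]),
      Finset.sum_singleton]
  ring

lemma sumB6 {n : ℕ} (hn : 6 ≤ n) (x : Vec n) :
    ∑ p ∈ B6 n hn, x p =
      x (⟨1, by omega⟩, ⟨0, by omega⟩) + x (⟨2, by omega⟩, ⟨1, by omega⟩)
      + x (⟨3, by omega⟩, ⟨2, by omega⟩) + x (⟨0, by omega⟩, ⟨3, by omega⟩)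
      + x (⟨4, by omega⟩, ⟨0, by omega⟩) + x (⟨4, by omega⟩, ⟨1, by omega⟩)
      + x (⟨4, by omega⟩, ⟨2, by omega⟩) + x (⟨4, by omega⟩, ⟨3, by omega⟩)
      + x (⟨5, by omega⟩, ⟨4, by omega⟩)
      + x (⟨0, by omega⟩, ⟨5, by omega⟩) + x (⟨1, by omega⟩, ⟨5, by omega⟩)
      + x (⟨2, by omega⟩, ⟨5, by omega⟩) + x (⟨3, by omega⟩, ⟨5, by omega⟩) := by
  unfold B6
  rw [Finset.sum_insert (by simp [Prod.ext_iff, Fin.ext_iff]),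
      Finset.sum_insert (by simp [Prod.ext_iff, Fin.ext_iff]),
      Finset.sum_insert (by simp [Prod.ext_iff, Fin.ext_iff]),
      Finset.sum_insert (by simp [Prod.ext_iff, Fin.ext_iff]),
      Finset.sum_insert (by simp [Prod.ext_iff, Fin.ext_iff]),
      Finset.sum_insert (by simp [Prod.ext_iff, Fin.ext_iff]),
      Finset.sum_insert (by simp [Prod.ext_iff, Fin.ext_iff]),
      Finset.sum_insert (by simp [Prod.ext_iff, Fin.ext_iff]),
      Finset.sum_insert (by simp [Prod.ext_iff, Fin.ext_iff]),
      Finset.sum_insert (by simp [Prod.ext_iff, Fin.ext_iff]),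
      Finset.sum_insert (by simp [Prod.ext_iff, Fin.ext_iff]),
      Finset.sum_insert (by simp [Prod.ext_iff, Fin.ext_iff]),
      Finset.sum_singleton]
  ring
lemma chi_nonneg {n : ℕ} (R : Finset (Fin n × Fin n)) (p : Fin n × Fin n) : 0 ≤ chi R p := by
  unfold chi; split <;> norm_num

lemma chi_eq_b01 {n : ℕ} {S : Finset (Fin n × Fin n)} {f : Fin n → ℝ}
    (hf : ∀ i j : Fin n, ((i, j) ∈ S ↔ f i + 1 < f j)) (i j : Fin n) :
    chi S (i, j) = b01 (f i) (f j) := by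
  unfold chi b01; exact if_congr (hf i j) rfl rfl

lemma semiorder_bound {n : ℕ} (hn : 6 ≤ n) {S : Finset (Fin n × Fin n)}
    (hS : IsSemiorderRel S) :
    lhs (primCoeff (A6 n hn) (B6 n hn)) (chi S)
      + chi S (⟨4, by omega⟩, ⟨5, by omega⟩) ≤ 1 := by
  obtain ⟨f, hf⟩ := hS
  rw [lhs_eq_sub, sumA6 hn, sumB6 hn]
  simp only [chi_eq_b01 hf]
  linarith [key (f ⟨0, by omega⟩) (f ⟨1, by omega⟩) (f ⟨2, by omega⟩) (f ⟨3, by omega⟩)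
    (f ⟨4, by omega⟩) (f ⟨5, by omega⟩)]

lemma empty_so (n : ℕ) : IsSemiorderRel (∅ : Finset (Fin n × Fin n)) :=
  ⟨fun _ => 0, fun i j => by simp⟩

lemma singleton_so {n : ℕ} (p : Fin n × Fin n) (hp : p.1 ≠ p.2) :
    IsSemiorderRel ({p} : Finset (Fin n × Fin n)) := by
  obtain ⟨i, j⟩ := p
  replace hp : i ≠ j := hp
  refine ⟨fun k => if k = j then 2 else if k = i then 0 else 1, fun k l => ?_⟩
  simp only [Finset.mem_singleton, Prod.mk.injEq]
  constructor
  · rintro ⟨rfl, rfl⟩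
    rw [if_neg hp, if_pos rfl, if_pos rfl]; norm_num
  · intro h
    rcases eq_or_ne l j with rfl | hl
    · rw [if_pos rfl] at h
      rcases eq_or_ne k i with rfl | hk
      · exact ⟨rfl, rfl⟩
      · exfalso
        rcases eq_or_ne k l with rfl | hk2
        · rw [if_pos rfl] at h; norm_num at h
        · rw [if_neg hk2, if_neg hk] at h; norm_num at h
    · exfalso
      have hle : (if l = j then (2:ℝ) else if l = i then 0 else 1) ≤ 1 := by
        rw [if_neg hl]; split_ifs <;> norm_num
      have hge : (0:ℝ) ≤ (if k = j then (2:ℝ) else if k = i then 0 else 1) := by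
        split_ifs <;> norm_num
      linarith

lemma lhs_add {n : ℕ} (α : Fin n × Fin n → ℝ) (x y : Vec n) :
    lhs α (x + y) = lhs α x + lhs α y := by
  unfold lhs
  rw [← Finset.sum_add_distrib]
  exact Finset.sum_congr rfl fun p _ => by simp only [Pi.add_apply]; ring

lemma lhs_smul {n : ℕ} (α : Fin n × Fin n → ℝ) (c : ℝ) (x : Vec n) :
    lhs α (c • x) = c * lhs α x := by
  unfold lhs
  rw [Finset.mul_sum]
  exact Finset.sum_congr rfl fun p _ => by simp only [Pi.smul_apply, smul_eq_mul]; ring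

lemma lhs_single {n : ℕ} (α : Fin n × Fin n → ℝ) (p : Fin n × Fin n) (c : ℝ) :
    lhs α (Pi.single p c) = α p * c := by
  unfold lhs
  rw [Finset.sum_eq_single p (fun q _ hq => by rw [Pi.single_eq_of_ne hq, mul_zero])
    (by simp), Pi.single_eq_same]

lemma alpha01 (n : ℕ) (hn : 6 ≤ n) :
    primCoeff (A6 n hn) (B6 n hn) (⟨0, by omega⟩, ⟨1, by omega⟩) = 1 := by
  unfold primCoeff
  rw [if_pos (by unfold A6; exact Finset.mem_insert_self _ _),
      if_neg (by unfold B6; intro h; simp [Prod.ext_iff, Fin.ext_iff] at h)]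
  norm_num

lemma alpha45 (n : ℕ) (hn : 6 ≤ n) :
    primCoeff (A6 n hn) (B6 n hn) (⟨4, by omega⟩, ⟨5, by omega⟩) = 0 := by
  unfold primCoeff
  rw [if_neg (by unfold A6; intro h; simp [Prod.ext_iff, Fin.ext_iff] at h),
      if_neg (by unfold B6; intro h; simp [Prod.ext_iff, Fin.ext_iff] at h)]
  norm_num

lemma alpha_diag (n : ℕ) (hn : 6 ≤ n) (i : Fin n) :
    primCoeff (A6 n hn) (B6 n hn) (i, i) = 0 := by
  unfold primCoeff
  rw [if_neg (by unfold A6; intro h; simp [Prod.ext_iff, Fin.ext_iff] at h; omega),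
      if_neg (by unfold B6; intro h; simp [Prod.ext_iff, Fin.ext_iff] at h; omega)]
  norm_num

lemma pso_strong (n : ℕ) (hn : 6 ≤ n) :
    PSO n ⊆ {x : Vec n | lhs (primCoeff (A6 n hn) (B6 n hn)) x
      + x (⟨4, by omega⟩, ⟨5, by omega⟩) ≤ 1} := by
  apply convexHull_min
  · rintro x ⟨R, hR, rfl⟩
    exact semiorder_bound hn hR
  · refine convex_halfSpace_le ⟨fun x y => ?_, fun c x => ?_⟩ 1
    · rw [lhs_add]; simp only [Pi.add_apply]; ring
    · rw [lhs_smul]; simp only [Pi.smul_apply, smul_eq_mul]; ring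

lemma pso_coord_nonneg (n : ℕ) (p : Fin n × Fin n) :
    PSO n ⊆ {x : Vec n | 0 ≤ x p} := by
  apply convexHull_min
  · rintro x ⟨R, hR, rfl⟩
    exact chi_nonneg R p
  · exact convex_halfSpace_ge ⟨fun x y => rfl, fun c x => rfl⟩ 0

lemma pso_diag (n : ℕ) : PSO n ⊆ {x : Vec n | ∀ i : Fin n, x (i, i) = 0} := by
  apply convexHull_min
  · rintro x ⟨R, ⟨f, hf⟩, rfl⟩ i
    unfold chi
    exact if_neg (fun h => by have := (hf i i).1 h; linarith)
  · have he : {x : Vec n | ∀ i : Fin n, x (i, i) = 0}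
        = ⋂ i : Fin n, {x : Vec n | x (i, i) = 0} := by
      ext x; simp [Set.mem_iInter]
    rw [he]
    exact convex_iInter fun i => convex_hyperplane ⟨fun x y => rfl, fun c x => rfl⟩ 0
noncomputable def Lm (n : ℕ) (hn : 6 ≤ n) : Vec n →ₗ[ℝ] ℝ × ℝ × (Fin n → ℝ) where
  toFun x := (lhs (primCoeff (A6 n hn) (B6 n hn)) x,
    x (⟨4, by omega⟩, ⟨5, by omega⟩), fun i => x (i, i))
  map_add' x y := by
    refine Prod.ext ?_ (Prod.ext ?_ ?_)
    · exact lhs_add _ x y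
    · rfl
    · rfl
  map_smul' c x := by
    refine Prod.ext ?_ (Prod.ext ?_ ?_)
    · simpa using lhs_smul _ c x
    · rfl
    · rfl

lemma Lm_surj (n : ℕ) (hn : 6 ≤ n) : Function.Surjective (Lm n hn) := by
  classical
  rintro ⟨a, b, g⟩
  set x : Vec n := a • (Pi.single ((⟨0, by omega⟩, ⟨1, by omega⟩) : Fin n × Fin n) (1:ℝ) : Vec n)
    + b • (Pi.single ((⟨4, by omega⟩, ⟨5, by omega⟩) : Fin n × Fin n) (1:ℝ) : Vec n)
    + ((fun p => if p.1 = p.2 then g p.1 else 0) : Vec n) with hx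
  refine ⟨x, ?_⟩
  have hw : lhs (primCoeff (A6 n hn) (B6 n hn)) (fun p => if p.1 = p.2 then g p.1 else 0) = 0 := by
    unfold lhs
    apply Finset.sum_eq_zero
    intro p _
    obtain ⟨u, v⟩ := p
    by_cases h : u = v
    · subst h; rw [alpha_diag n hn u, zero_mul]
    · simp only [if_neg h, mul_zero]
  refine Prod.ext ?_ (Prod.ext ?_ ?_)
  · show lhs (primCoeff (A6 n hn) (B6 n hn)) x = a
    rw [hx, lhs_add, lhs_add, lhs_smul, lhs_smul, lhs_single, lhs_single, alpha01 n hn,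
      alpha45 n hn, hw]
    ring
  · show x (⟨4, by omega⟩, ⟨5, by omega⟩) = b
    rw [hx]
    simp only [Pi.add_apply, Pi.smul_apply, smul_eq_mul]
    rw [Pi.single_eq_of_ne (by simp [Prod.ext_iff, Fin.ext_iff]), Pi.single_eq_same,
      if_neg (by simp [Fin.ext_iff])]
    ring
  · show (fun i => x (i, i)) = g
    funext i
    rw [hx]
    simp only [Pi.add_apply, Pi.smul_apply, smul_eq_mul]
    rw [Pi.single_eq_of_ne (show (i, i) ≠ _ by
        intro h; simp [Prod.ext_iff, Fin.ext_iff] at h; omega),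
      Pi.single_eq_of_ne (show (i, i) ≠ _ by
        intro h; simp [Prod.ext_iff, Fin.ext_iff] at h; omega)]
    simp

lemma finrank_ker_Lm (n : ℕ) (hn : 6 ≤ n) :
    Module.finrank ℝ (LinearMap.ker (Lm n hn)) + (n + 2) = n * n := by
  have h1 := LinearMap.finrank_range_add_finrank_ker (Lm n hn)
  rw [LinearMap.range_eq_top.mpr (Lm_surj n hn), finrank_top] at h1
  have h2 : Module.finrank ℝ (ℝ × ℝ × (Fin n → ℝ)) = n + 2 := by
    rw [Module.finrank_prod, Module.finrank_prod, Module.finrank_self,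
      Module.finrank_fintype_fun_eq_card, Fintype.card_fin]
    ring
  have h3 : Module.finrank ℝ (Vec n) = n * n := by
    rw [Module.finrank_fintype_fun_eq_card]
    simp [Fintype.card_prod]
  omega

def diagE (n : ℕ) : {p : Fin n × Fin n // p.1 = p.2} ≃ Fin n where
  toFun q := q.1.1
  invFun i := ⟨(i, i), rfl⟩
  left_inv := fun ⟨⟨a, b⟩, h⟩ => Subtype.ext (Prod.ext rfl h)
  right_inv i := rfl

lemma card_offdiag (n : ℕ) :
    Fintype.card {p : Fin n × Fin n // p.1 ≠ p.2} = n * n - n := by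
  have e : Fintype.card {p : Fin n × Fin n // p.1 = p.2} = n := by
    rw [Fintype.card_congr (diagE n), Fintype.card_fin]
  have := Fintype.card_subtype_compl (fun p : Fin n × Fin n => p.1 = p.2)
  rw [e] at this
  simpa [Fintype.card_prod] using this

lemma chi_singleton {n : ℕ} (p : Fin n × Fin n) :
    chi ({p} : Finset (Fin n × Fin n)) = Pi.single p 1 := by
  funext q
  simp [chi, Pi.single_apply]

lemma pso_dim_lb (n : ℕ) (hn : 6 ≤ n) :
    n * n - n ≤ Module.finrank ℝ (affineSpan ℝ (PSO n)).direction := by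
  classical
  set famV : {p : Fin n × Fin n // p.1 ≠ p.2} → Vec n :=
    fun q => (Pi.single q.1 1 : Vec n) with hfam
  have hLI : LinearIndependent ℝ famV := by
    have h := ((Pi.basisFun ℝ (Fin n × Fin n)).linearIndependent).comp
      (Subtype.val : {p : Fin n × Fin n // p.1 ≠ p.2} → Fin n × Fin n) Subtype.val_injective
    have h2 : (⇑(Pi.basisFun ℝ (Fin n × Fin n)) ∘
        (Subtype.val : {p : Fin n × Fin n // p.1 ≠ p.2} → Fin n × Fin n)) = famV := by
      funext q
      simp [hfam, Function.comp, Pi.basisFun_apply]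
    rwa [h2] at h
  have hspan_le : Submodule.span ℝ (Set.range famV) ≤ (affineSpan ℝ (PSO n)).direction := by
    rw [Submodule.span_le]
    rintro v ⟨q, rfl⟩
    have h1 : chi ({q.1} : Finset (Fin n × Fin n)) ∈ PSO n :=
      subset_convexHull ℝ _ ⟨{q.1}, singleton_so q.1 q.2, rfl⟩
    have h2 : chi (∅ : Finset (Fin n × Fin n)) ∈ PSO n :=
      subset_convexHull ℝ _ ⟨∅, empty_so n, rfl⟩
    have h3 := AffineSubspace.vsub_mem_direction
      (subset_affineSpan ℝ _ h1) (subset_affineSpan ℝ _ h2)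
    have h4 : chi ({q.1} : Finset (Fin n × Fin n)) -ᵥ chi (∅ : Finset (Fin n × Fin n))
        = famV q := by
      rw [vsub_eq_sub, chi_singleton]
      have : chi (∅ : Finset (Fin n × Fin n)) = 0 := by
        funext p; unfold chi; rw [if_neg (Finset.notMem_empty p)]; rfl
      rw [this, sub_zero, hfam]
    rwa [h4] at h3
  calc n * n - n = Fintype.card {p : Fin n × Fin n // p.1 ≠ p.2} := (card_offdiag n).symm
    _ = Module.finrank ℝ (Submodule.span ℝ (Set.range famV)) := (finrank_span_eq_card hLI).symm
    _ ≤ _ := Submodule.finrank_mono hspan_le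

lemma face_dim_ub (n : ℕ) (hn : 6 ≤ n) :
    Module.finrank ℝ (affineSpan ℝ (Face (primCoeff (A6 n hn) (B6 n hn)) 1 (PSO n))).direction
      ≤ Module.finrank ℝ (LinearMap.ker (Lm n hn)) := by
  have hFaceL : ∀ x ∈ Face (primCoeff (A6 n hn) (B6 n hn)) 1 (PSO n),
      Lm n hn x = (1, 0, fun _ => 0) := by
    rintro x ⟨hxP, hxe⟩
    have h1 : lhs (primCoeff (A6 n hn) (B6 n hn)) x
        + x (⟨4, by omega⟩, ⟨5, by omega⟩) ≤ 1 := pso_strong n hn hxP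
    have h2 : (0 : ℝ) ≤ x (⟨4, by omega⟩, ⟨5, by omega⟩) :=
      pso_coord_nonneg n _ hxP
    have h45 : x (⟨4, by omega⟩, ⟨5, by omega⟩) = 0 := by
      rw [hxe] at h1; linarith
    have hdiag : ∀ i : Fin n, x (i, i) = 0 := pso_diag n hxP
    refine Prod.ext ?_ (Prod.ext ?_ ?_)
    · exact hxe
    · exact h45
    · funext i; exact hdiag i
  have hdir : (affineSpan ℝ (Face (primCoeff (A6 n hn) (B6 n hn)) 1 (PSO n))).direction
      ≤ LinearMap.ker (Lm n hn) := by
    rw [direction_affineSpan, vectorSpan_def, Submodule.span_le]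
    rintro v hv
    rw [Set.mem_vsub] at hv
    obtain ⟨x, hx, y, hy, rfl⟩ := hv
    rw [SetLike.mem_coe, LinearMap.mem_ker, vsub_eq_sub, map_sub, hFaceL x hx, hFaceL y hy,
      sub_self]
  exact Submodule.finrank_mono hdir
theorem exceptional_not_facet (n : ℕ) (hn : 6 ≤ n) :
    Valid (primCoeff (A6 n hn) (B6 n hn)) 1 (PSO n) ∧
    ¬ IsFDI (primCoeff (A6 n hn) (B6 n hn)) 1 (PSO n) ∧
    (∀ S : Finset (Fin n × Fin n), IsSemiorderRel S →
      lhs (primCoeff (A6 n hn) (B6 n hn)) (chi S) = 1 →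
      ((⟨4, by omega⟩ : Fin n), (⟨5, by omega⟩ : Fin n)) ∉ S) := by
  refine ⟨?_, ?_, ?_⟩
  · intro x hx
    have h1 : lhs (primCoeff (A6 n hn) (B6 n hn)) x
        + x (⟨4, by omega⟩, ⟨5, by omega⟩) ≤ 1 := pso_strong n hn hx
    have h2 : (0:ℝ) ≤ x (⟨4, by omega⟩, ⟨5, by omega⟩) := pso_coord_nonneg n _ hx
    linarith
  · rintro ⟨-, hdim⟩
    have hPSOne : PSO n ≠ ∅ :=
      Set.Nonempty.ne_empty ⟨chi (∅ : Finset (Fin n × Fin n)),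
        subset_convexHull ℝ _ ⟨∅, empty_so n, rfl⟩⟩
    have hlow := pso_dim_lb n hn
    have hker := finrank_ker_Lm n hn
    have hmn : n + 2 ≤ n * n := by nlinarith
    by_cases hF : Face (primCoeff (A6 n hn) (B6 n hn)) 1 (PSO n) = ∅
    · unfold adim at hdim
      rw [if_pos hF, if_neg hPSOne] at hdim
      omega
    · unfold adim at hdim
      rw [if_neg hF, if_neg hPSOne] at hdim
      have hup := face_dim_ub n hn
      omega
  · intro S hS heq h45
    have hb := semiorder_bound hn hS
    have hc : chi S (⟨4, by omega⟩, ⟨5, by omega⟩) = 1 := by unfold chi; rw [if_pos h45]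
    rw [heq, hc] at hb
    norm_num at hb
end

section
/- Assume A and B are disjoint subsets of Arcs(n) satisfying Conditions C1 and C2. (a) If A contains pairs (i,j), (j,k) and (u,v), (v,w) such that {(i,j),(j,k)} ∩ {(u,v),(v,w)} = ∅, then A and B satisfy Condition C4 at the elements i, j, k (i.e. either (i,k) ∈ B or there exists p ∈ {1,…,n}∖{i,j,k} with (i,p),(p,k) ∈ B). (b) If A contains pairs (i,j), (j,k), (k,l) and (u,v), (v,w) such that {(i,j),(j,k),(k,l)} ∩ {(u,v),(v,w)} = ∅, then A and B satisfy Condition C5 at the elements i, j, k, l. -/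
open Finset

theorem lemma_technique (n : ℕ) (hn : 2 ≤ n)
    (A B : Finset (Fin n × Fin n)) (hdisj : Disjoint A B)
    (hA : InArcs A) (hB : InArcs B) (hC1 : C1 A) (hC2 : C2 A B) :
    (∀ i j k u v w : Fin n,
      (i, j) ∈ A → (j, k) ∈ A → (u, v) ∈ A → (v, w) ∈ A →
      i ≠ j → j ≠ k → i ≠ k →
      (i, j) ≠ (u, v) → (i, j) ≠ (v, w) → (j, k) ≠ (u, v) → (j, k) ≠ (v, w) →
      ((i, k) ∈ B ∨ ∃ p : Fin n, p ≠ i ∧ p ≠ j ∧ p ≠ k ∧ (i, p) ∈ B ∧ (p, k) ∈ B)) ∧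
    (∀ i j k l u v w : Fin n,
      (i, j) ∈ A → (j, k) ∈ A → (k, l) ∈ A → (u, v) ∈ A → (v, w) ∈ A →
      i ≠ j → i ≠ k → i ≠ l → j ≠ k → j ≠ l → k ≠ l →
      (i, j) ≠ (u, v) → (i, j) ≠ (v, w) → (j, k) ≠ (u, v) → (j, k) ≠ (v, w) →
      (k, l) ≠ (u, v) → (k, l) ≠ (v, w) →
      ((i, k) ∈ B ∨ (j, l) ∈ B ∨
       (∃ r : Fin n, r ≠ i ∧ r ≠ j ∧ r ≠ k ∧ r ≠ l ∧ (i, r) ∈ B ∧ (r, k) ∈ B) ∨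
       (∃ s : Fin n, s ≠ i ∧ s ≠ j ∧ s ≠ k ∧ s ≠ l ∧ (j, s) ∈ B ∧ (s, l) ∈ B) ∨
       (∃ t : Fin n, t ≠ i ∧ t ≠ j ∧ t ≠ k ∧ t ≠ l ∧ (i, t) ∈ B ∧ (t, l) ∈ B) ∨
       (∃ x y : Fin n, x ≠ y ∧ x ≠ i ∧ x ≠ j ∧ x ≠ k ∧ x ≠ l ∧
          y ≠ i ∧ y ≠ j ∧ y ≠ k ∧ y ≠ l ∧ (i, x) ∈ B ∧ (x, y) ∈ B ∧ (y, l) ∈ B))) := by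
  constructor
  · intro i j k u v w hij hjk huv hvw hijne hjkne hikne h1 h2 h3 h4
    have huvne : u ≠ v := hA _ huv
    have hvwne : v ≠ w := hA _ hvw
    obtain ⟨hiu, hjv⟩ := hC1 i j u v hij huv h1
    obtain ⟨hiv, hjw⟩ := hC1 i j v w hij hvw h2
    obtain ⟨hju, hkv⟩ := hC1 j k u v hjk huv h3
    obtain ⟨_, hkw⟩ := hC1 j k v w hjk hvw h4
    exact Or.inr ⟨v, hiv.symm, hjv.symm, hkv.symm,
      hC2 i j u v hij huv hijne hiu hiv hju hjv huvne,
      hC2 v w j k hvw hjk hvwne hjv.symm hkv.symm hjw.symm hkw.symm hjkne⟩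
  · intro i j k l u v w hij hjk hkl huv hvw hijne hikne hilne hjkne hjlne hklne
      h1 h2 h3 h4 h5 h6
    have huvne : u ≠ v := hA _ huv
    have hvwne : v ≠ w := hA _ hvw
    obtain ⟨hiu, hjv⟩ := hC1 i j u v hij huv h1
    obtain ⟨hiv, hjw⟩ := hC1 i j v w hij hvw h2
    obtain ⟨hju, hkv⟩ := hC1 j k u v hjk huv h3
    obtain ⟨_, hkw⟩ := hC1 j k v w hjk hvw h4
    obtain ⟨hku, hlv⟩ := hC1 k l u v hkl huv h5
    obtain ⟨_, hlw⟩ := hC1 k l v w hkl hvw h6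
    refine Or.inr (Or.inr (Or.inr (Or.inr (Or.inl
      ⟨v, hiv.symm, hjv.symm, hkv.symm, hlv.symm, ?_, ?_⟩))))
    · exact hC2 i j u v hij huv hijne hiu hiv hju hjv huvne
    · exact hC2 v w k l hvw hkl hvwne hkv.symm hlv.symm hkw.symm hlw.symm hklne
end
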